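/- Let S be a finite set of axis-aligned squares, with a storing cell C_σ fixed for each σ ∈ S. For σ ∈ S, let A be a dyadic cell of maximal side length such that C_σ ⊆ A and A ⊆ τ for some τ ∈ S (such A exists since C_σ ⊆ σ), let τ_σ ∈ S be any square with A ⊆ τ_σ, and set C*(σ) := C_{τ_σ}. Then for all σ, ρ ∈ S: σ and ρ are connected in the intersection graph G[S] if and only if C*(σ) and C*(ρ) are connected in the proxy graph, and this holds for every valid choice of the cells A and squares τ_σ, τ_ρ. -/

import Mathlib

open Set

/-- A dyadic cell at level `level` (side length `2^level`) with lower-left corner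
`(a·2^level, b·2^level)`. -/
structure DyadicCell where
  level : ℤ
  a : ℤ
  b : ℤ
deriving DecidableEq

/-- The side length of a dyadic cell. -/
noncomputable def DyadicCell.side (C : DyadicCell) : ℝ := 2 ^ C.level

/-- The dyadic cell as a subset of the plane. -/
noncomputable def DyadicCell.toSet (C : DyadicCell) : Set (ℝ × ℝ) :=
  Set.Icc ((C.a : ℝ) * 2 ^ C.level) ((C.a + 1 : ℝ) * 2 ^ C.level) ×ˢ
    Set.Icc ((C.b : ℝ) * 2 ^ C.level) ((C.b + 1 : ℝ) * 2 ^ C.level)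

/-- `5C`: the square obtained by scaling the cell `C` by a factor `5` about its center. -/
noncomputable def DyadicCell.scale5 (C : DyadicCell) : Set (ℝ × ℝ) :=
  Set.Icc ((C.a - 2 : ℝ) * 2 ^ C.level) ((C.a + 3 : ℝ) * 2 ^ C.level) ×ˢ
    Set.Icc ((C.b - 2 : ℝ) * 2 ^ C.level) ((C.b + 3 : ℝ) * 2 ^ C.level)

/-- An axis-aligned square `[x, x+s] × [y, y+s]` of side length `s > 0`. -/
structure Square where
  x : ℝ
  y : ℝ
  s : ℝ
  s_pos : 0 < s

/-- The square as a subset of the plane. -/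
noncomputable def Square.toSet (σ : Square) : Set (ℝ × ℝ) :=
  Set.Icc σ.x (σ.x + σ.s) ×ˢ Set.Icc σ.y (σ.y + σ.s)

/-- The center of a square. -/
noncomputable def Square.center (σ : Square) : ℝ × ℝ := (σ.x + σ.s / 2, σ.y + σ.s / 2)

/-- `C` is a storing cell of `σ`: a dyadic cell of maximal side length among those that
contain the center of `σ` and are contained in `σ`. -/
def IsStoringCell (σ : Square) (C : DyadicCell) : Prop :=
  σ.center ∈ C.toSet ∧ C.toSet ⊆ σ.toSet ∧
    ∀ D : DyadicCell, σ.center ∈ D.toSet → D.toSet ⊆ σ.toSet → D.side ≤ C.side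

/-- `C` is a storing cell of the set `S` (with fixed storing-cell choice `c`):
some square of `S` is stored in `C`. -/
def IsStoringCellOf (S : Finset Square) (c : Square → DyadicCell) (C : DyadicCell) : Prop :=
  ∃ σ ∈ S, c σ = C

/-- `π(C)`: the squares of `S` stored in `C`. -/
def piCell (S : Finset Square) (c : Square → DyadicCell) (C : DyadicCell) : Set Square :=
  {σ | σ ∈ S ∧ c σ = C}

/-- `𝒞(σ)`: the dyadic cells `D ⊆ σ` containing at least one storing cell of `S`,
maximal with both properties. -/
def calC (S : Finset Square) (c : Square → DyadicCell) (σ : Square) : Set DyadicCell :=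
  {D | D.toSet ⊆ σ.toSet ∧ (∃ E, IsStoringCellOf S c E ∧ E.toSet ⊆ D.toSet) ∧
    ¬ ∃ D' : DyadicCell, D.toSet ⊂ D'.toSet ∧ D'.toSet ⊆ σ.toSet ∧
      ∃ E, IsStoringCellOf S c E ∧ E.toSet ⊆ D'.toSet}

/-- `𝒫(γ)`: the storing cells `D` of `S` with `side(D) ≤ side(γ)` such that `5D`
intersects the boundary of `γ`. -/
def calP (S : Finset Square) (c : Square → DyadicCell) (γ : Square) : Set DyadicCell :=
  {D | IsStoringCellOf S c D ∧ D.side ≤ γ.s ∧ (D.scale5 ∩ frontier γ.toSet).Nonempty}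

/-- Adjacency in the intersection graph `G[S]`. -/
def IGAdj (S : Finset Square) (a b : Square) : Prop :=
  a ∈ S ∧ b ∈ S ∧ a ≠ b ∧ (a.toSet ∩ b.toSet).Nonempty

/-- Connectivity in the intersection graph `G[S]`. -/
def IGConn (S : Finset Square) : Square → Square → Prop :=
  Relation.ReflTransGen (IGAdj S)

/-- Adjacency in the proxy graph on storing cells of `S`. -/
def ProxyAdj (S : Finset Square) (c : Square → DyadicCell) (C₁ C₂ : DyadicCell) : Prop :=
  C₁ ≠ C₂ ∧ IsStoringCellOf S c C₁ ∧ IsStoringCellOf S c C₂ ∧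
    ∃ γ ∈ piCell S c C₁, ∃ β ∈ piCell S c C₂,
      (γ.toSet ∩ β.toSet).Nonempty ∧ (C₂ ∈ calP S c γ ∨ C₁ ∈ calP S c β)

/-- Connectivity in the proxy graph. -/
def ProxyConn (S : Finset Square) (c : Square → DyadicCell) :
    DyadicCell → DyadicCell → Prop :=
  Relation.ReflTransGen (ProxyAdj S c)


/-! ### Auxiliary development -/

section Aux

open DyadicCell

lemma two_zpow_pos (l : ℤ) : (0:ℝ) < 2 ^ l := zpow_pos (by norm_num) l

lemma two_zpow_le {i j : ℤ} (h : i ≤ j) : (2:ℝ) ^ i ≤ 2 ^ j :=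
  zpow_le_zpow_right₀ (by norm_num) h

lemma two_zpow_le_rev {i j : ℤ} (h : (2:ℝ) ^ i ≤ 2 ^ j) : i ≤ j :=
  (zpow_le_zpow_iff_right₀ (by norm_num)).1 h

lemma two_zpow_lt_rev {i j : ℤ} (h : (2:ℝ) ^ i < 2 ^ j) : i < j :=
  (zpow_lt_zpow_iff_right₀ (by norm_num)).1 h

lemma DyadicCell.side_pos (C : DyadicCell) : 0 < C.side := two_zpow_pos _

lemma box_subset_iff {a b c d a' b' c' d' : ℝ} (hab : a ≤ b) (hcd : c ≤ d) :
    Icc a b ×ˢ Icc c d ⊆ Icc a' b' ×ˢ Icc c' d' ↔ a' ≤ a ∧ b ≤ b' ∧ c' ≤ c ∧ d ≤ d' := by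
  rw [Set.prod_subset_prod_iff]
  constructor
  · rintro (⟨h1, h2⟩ | h | h)
    · obtain ⟨p1, p2⟩ := (Set.Icc_subset_Icc_iff hab).1 h1
      obtain ⟨q1, q2⟩ := (Set.Icc_subset_Icc_iff hcd).1 h2
      exact ⟨p1, p2, q1, q2⟩
    · exact absurd h (Set.nonempty_Icc.2 hab).ne_empty
    · exact absurd h (Set.nonempty_Icc.2 hcd).ne_empty
  · rintro ⟨p1, p2, q1, q2⟩
    exact Or.inl ⟨Set.Icc_subset_Icc p1 p2, Set.Icc_subset_Icc q1 q2⟩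

lemma mem_box {p : ℝ × ℝ} {a b c d : ℝ} :
    p ∈ Icc a b ×ˢ Icc c d ↔ a ≤ p.1 ∧ p.1 ≤ b ∧ c ≤ p.2 ∧ p.2 ≤ d := by
  rw [Set.mem_prod, Set.mem_Icc, Set.mem_Icc]; tauto

/-- coordinates of a cell -/
lemma cell_toSet (C : DyadicCell) :
    C.toSet = Icc ((C.a : ℝ) * 2 ^ C.level) ((C.a + 1 : ℝ) * 2 ^ C.level) ×ˢ
      Icc ((C.b : ℝ) * 2 ^ C.level) ((C.b + 1 : ℝ) * 2 ^ C.level) := rfl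

lemma cell_lr (C : DyadicCell) : ((C.a : ℝ)) * 2 ^ C.level ≤ (C.a + 1 : ℝ) * 2 ^ C.level := by
  nlinarith [two_zpow_pos C.level]

lemma cell_bt (C : DyadicCell) : ((C.b : ℝ)) * 2 ^ C.level ≤ (C.b + 1 : ℝ) * 2 ^ C.level := by
  nlinarith [two_zpow_pos C.level]

lemma square_lr (σ : Square) : σ.x ≤ σ.x + σ.s := by nlinarith [σ.s_pos]
lemma square_bt (σ : Square) : σ.y ≤ σ.y + σ.s := by nlinarith [σ.s_pos]

lemma scale5_lr (C : DyadicCell) : ((C.a : ℝ) - 2) * 2 ^ C.level ≤ (C.a + 3 : ℝ) * 2 ^ C.level := by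
  nlinarith [two_zpow_pos C.level]

lemma cell_subset_square_iff {C : DyadicCell} {σ : Square} :
    C.toSet ⊆ σ.toSet ↔ σ.x ≤ (C.a : ℝ) * 2 ^ C.level ∧ ((C.a : ℝ) + 1) * 2 ^ C.level ≤ σ.x + σ.s
      ∧ σ.y ≤ (C.b : ℝ) * 2 ^ C.level ∧ ((C.b : ℝ) + 1) * 2 ^ C.level ≤ σ.y + σ.s := by
  rw [cell_toSet, Square.toSet, box_subset_iff (cell_lr C) (cell_bt C)]

lemma square_subset_square_iff {σ τ : Square} :
    σ.toSet ⊆ τ.toSet ↔ τ.x ≤ σ.x ∧ σ.x + σ.s ≤ τ.x + τ.s ∧ τ.y ≤ σ.y ∧ σ.y + σ.s ≤ τ.y + τ.s := by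
  rw [Square.toSet, Square.toSet, box_subset_iff (square_lr σ) (square_bt σ)]

lemma cell_subset_cell_iff {C D : DyadicCell} :
    C.toSet ⊆ D.toSet ↔ (D.a : ℝ) * 2 ^ D.level ≤ (C.a : ℝ) * 2 ^ C.level
      ∧ ((C.a : ℝ) + 1) * 2 ^ C.level ≤ ((D.a : ℝ) + 1) * 2 ^ D.level
      ∧ (D.b : ℝ) * 2 ^ D.level ≤ (C.b : ℝ) * 2 ^ C.level
      ∧ ((C.b : ℝ) + 1) * 2 ^ C.level ≤ ((D.b : ℝ) + 1) * 2 ^ D.level := by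
  rw [cell_toSet, cell_toSet, box_subset_iff (cell_lr C) (cell_bt C)]

lemma square_subset_scale5_iff {σ : Square} {C : DyadicCell} :
    σ.toSet ⊆ C.scale5 ↔ ((C.a : ℝ) - 2) * 2 ^ C.level ≤ σ.x
      ∧ σ.x + σ.s ≤ ((C.a : ℝ) + 3) * 2 ^ C.level
      ∧ ((C.b : ℝ) - 2) * 2 ^ C.level ≤ σ.y
      ∧ σ.y + σ.s ≤ ((C.b : ℝ) + 3) * 2 ^ C.level := by
  rw [Square.toSet, DyadicCell.scale5, box_subset_iff (square_lr σ) (square_bt σ)]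

lemma cell_nonempty (C : DyadicCell) : C.toSet.Nonempty :=
  ⟨((C.a : ℝ) * 2 ^ C.level, (C.b : ℝ) * 2 ^ C.level), by
    rw [cell_toSet, mem_box]
    refine ⟨le_refl _, cell_lr C, le_refl _, cell_bt C⟩⟩

lemma square_nonempty (σ : Square) : σ.toSet.Nonempty :=
  ⟨(σ.x, σ.y), by rw [Square.toSet, mem_box]; exact ⟨le_refl _, square_lr σ, le_refl _, square_bt σ⟩⟩

lemma square_closed (σ : Square) : IsClosed σ.toSet := (isClosed_Icc).prod isClosed_Icc

lemma square_preconnected (σ : Square) : IsPreconnected σ.toSet :=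
  ((convex_Icc _ _).prod (convex_Icc _ _)).isPreconnected

lemma scale5_preconnected (C : DyadicCell) : IsPreconnected C.scale5 :=
  ((convex_Icc _ _).prod (convex_Icc _ _)).isPreconnected

lemma square_interior (σ : Square) :
    interior σ.toSet = Ioo σ.x (σ.x + σ.s) ×ˢ Ioo σ.y (σ.y + σ.s) := by
  rw [Square.toSet, interior_prod_eq, interior_Icc, interior_Icc]

end Aux

section Anc

/-- rewrite a multiple of a coarse grid as a multiple of a finer grid -/
lemma grid_cast {l L : ℤ} (h : l ≤ L) (p : ℤ) :
    (p : ℝ) * 2 ^ L = ((p * 2 ^ (L - l).toNat : ℤ) : ℝ) * 2 ^ l := by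
  have h3 : (2:ℝ) ^ L = (2:ℝ) ^ ((L - l).toNat) * 2 ^ l := by
    rw [← zpow_natCast (2:ℝ) (L - l).toNat, ← zpow_add₀ (by norm_num : (2:ℝ) ≠ 0)]
    congr 1
    omega
  push_cast
  rw [h3]
  ring

lemma grid_le_iff {l : ℤ} {p q : ℤ} : (p : ℝ) * 2 ^ l ≤ (q : ℝ) * 2 ^ l ↔ p ≤ q := by
  rw [mul_le_mul_iff_of_pos_right (two_zpow_pos l), Int.cast_le]

lemma grid_lt_iff {l : ℤ} {p q : ℤ} : (p : ℝ) * 2 ^ l < (q : ℝ) * 2 ^ l ↔ p < q := by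
  rw [mul_lt_mul_iff_of_pos_right (two_zpow_pos l), Int.cast_lt]

/-- The parent dyadic cell. -/
def cellParent (C : DyadicCell) : DyadicCell := ⟨C.level + 1, C.a / 2, C.b / 2⟩

lemma cellParent_side (C : DyadicCell) : (cellParent C).side = 2 * C.side := by
  show (2:ℝ) ^ (C.level + 1) = 2 * 2 ^ C.level
  rw [zpow_add_one₀ (by norm_num : (2:ℝ) ≠ 0)]
  ring

lemma parent_coord_l {l : ℤ} (a : ℤ) : ((a / 2 : ℤ) : ℝ) * 2 ^ (l + 1) ≤ (a : ℝ) * 2 ^ l := by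
  rw [grid_cast (by omega : l ≤ l + 1) (a/2)]
  rw [show (l + 1 - l).toNat = 1 by omega]
  exact grid_le_iff.2 (by omega)

lemma parent_coord_r {l : ℤ} (a : ℤ) :
    ((a : ℝ) + 1) * 2 ^ l ≤ (((a / 2 : ℤ) : ℝ) + 1) * 2 ^ (l + 1) := by
  have h1 : ((a : ℝ) + 1) * 2 ^ l = (((a + 1 : ℤ)) : ℝ) * 2 ^ l := by push_cast; ring
  have h2 : (((a / 2 : ℤ) : ℝ) + 1) * 2 ^ (l + 1) = (((a / 2 + 1 : ℤ)) : ℝ) * 2 ^ (l+1) := by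
    push_cast; ring
  rw [h1, h2, grid_cast (by omega : l ≤ l + 1) (a/2+1), show (l + 1 - l).toNat = 1 by omega]
  exact grid_le_iff.2 (by omega)

lemma subset_cellParent (C : DyadicCell) : C.toSet ⊆ (cellParent C).toSet := by
  rw [cell_subset_cell_iff]
  exact ⟨parent_coord_l C.a, parent_coord_r C.a, parent_coord_l C.b, parent_coord_r C.b⟩

/-- iterated parent -/
def cellAnc (C : DyadicCell) : ℕ → DyadicCell
  | 0 => C
  | n+1 => cellParent (cellAnc C n)

lemma cellAnc_level (C : DyadicCell) (n : ℕ) : (cellAnc C n).level = C.level + n := by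
  induction n with
  | zero => simp [cellAnc]
  | succ n ih => show (cellAnc C n).level + 1 = _ ; rw [ih]; push_cast; ring

lemma cellAnc_side (C : DyadicCell) (n : ℕ) : (cellAnc C n).side = 2 ^ n * C.side := by
  induction n with
  | zero => simp [cellAnc]
  | succ n ih =>
      show (cellParent (cellAnc C n)).side = _
      rw [cellParent_side, ih, pow_succ]; ring

lemma subset_cellAnc (C : DyadicCell) (n : ℕ) : C.toSet ⊆ (cellAnc C n).toSet := by
  induction n with
  | zero => exact subset_rfl
  | succ n ih => exact ih.trans (subset_cellParent _)

lemma cellAnc_parent (C : DyadicCell) (n : ℕ) :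
    cellAnc (cellParent C) n = cellAnc C (n + 1) := by
  induction n with
  | zero => rfl
  | succ n ih => show cellParent (cellAnc (cellParent C) n) = _; rw [ih]; rfl

lemma cellAnc_le_subset (C : DyadicCell) {n m : ℕ} (h : n ≤ m) :
    (cellAnc C n).toSet ⊆ (cellAnc C m).toSet := by
  induction m with
  | zero => rw [Nat.le_zero.1 h]
  | succ m ih =>
      rcases Nat.lt_or_ge n (m+1) with hl | hg
      · exact (ih (by omega)).trans (subset_cellParent _)
      · rw [show n = m + 1 by omega]

lemma level_le_of_subset {C D : DyadicCell} (h : C.toSet ⊆ D.toSet) : C.level ≤ D.level := by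
  rw [cell_subset_cell_iff] at h
  obtain ⟨h1, h2, -, -⟩ := h
  have e1 : ((C.a : ℝ) + 1) * 2 ^ C.level = C.a * 2 ^ C.level + 2 ^ C.level := by ring
  have e2 : ((D.a : ℝ) + 1) * 2 ^ D.level = D.a * 2 ^ D.level + 2 ^ D.level := by ring
  exact two_zpow_le_rev (by linarith)

lemma eq_of_subset_of_level_eq {C D : DyadicCell} (h : C.toSet ⊆ D.toSet)
    (hl : C.level = D.level) : C = D := by
  rw [cell_subset_cell_iff] at h
  obtain ⟨h1, h2, h3, h4⟩ := h
  rw [← hl] at h1 h2 h3 h4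
  have e1 : D.a ≤ C.a := grid_le_iff.1 h1
  have e2 : C.a + 1 ≤ D.a + 1 := by
    have := h2
    rw [show ((C.a:ℝ)+1) = ((C.a+1 : ℤ):ℝ) by push_cast; ring,
        show ((D.a:ℝ)+1) = ((D.a+1 : ℤ):ℝ) by push_cast; ring] at this
    exact grid_le_iff.1 this
  have e3 : D.b ≤ C.b := grid_le_iff.1 h3
  have e4 : C.b + 1 ≤ D.b + 1 := by
    have := h4
    rw [show ((C.b:ℝ)+1) = ((C.b+1 : ℤ):ℝ) by push_cast; ring,
        show ((D.b:ℝ)+1) = ((D.b+1 : ℤ):ℝ) by push_cast; ring] at this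
    exact grid_le_iff.1 this
  cases C; cases D
  simp_all
  omega

lemma int_parent_step {A a : ℤ} {d : ℕ} (hd : 1 ≤ d) (h1 : A * 2 ^ d ≤ a)
    (h2 : a + 1 ≤ (A + 1) * 2 ^ d) :
    A * 2 ^ d ≤ (a / 2) * 2 ∧ ((a / 2) + 1) * 2 ≤ (A + 1) * 2 ^ d := by
  have hd2 : (2:ℤ) ^ d = 2 * 2 ^ (d - 1) := by
    conv_lhs => rw [show d = (d-1)+1 by omega]
    rw [pow_succ]; ring
  have hK : (0:ℤ) < 2 ^ (d-1) := pow_pos (by norm_num) _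
  set K := (2:ℤ) ^ (d-1) with hKdef
  set M := A * K with hM
  have h1' : 2 * M ≤ a := by rw [hd2] at h1; linarith [h1, hM]
  have h2' : a + 1 ≤ 2 * (M + K) := by
    rw [hd2] at h2; nlinarith [h2]
  have g1 : A * 2 ^ d = 2 * M := by rw [hd2]; ring
  have g2 : (A + 1) * 2 ^ d = 2 * (M + K) := by rw [hd2]; ring
  rw [g1, g2]
  omega

lemma coord_to_int {l L : ℤ} (h : l ≤ L) {p q : ℤ} :
    (p : ℝ) * 2 ^ L ≤ (q : ℝ) * 2 ^ l ↔ p * 2 ^ (L - l).toNat ≤ q := by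
  rw [grid_cast h p, grid_le_iff]

lemma coord_to_int' {l L : ℤ} (h : l ≤ L) {p q : ℤ} :
    (q : ℝ) * 2 ^ l ≤ (p : ℝ) * 2 ^ L ↔ q ≤ p * 2 ^ (L - l).toNat := by
  rw [grid_cast h p, grid_le_iff]

lemma int_parent_step' {A a : ℤ} {d : ℕ} (hd : 1 ≤ d) (h1 : A * 2 ^ d ≤ a)
    (h2 : a + 1 ≤ (A + 1) * 2 ^ d) :
    A * 2 ^ (d - 1) ≤ a / 2 ∧ a / 2 + 1 ≤ (A + 1) * 2 ^ (d - 1) := by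
  have hd2 : (2:ℤ) ^ d = 2 ^ (d - 1) * 2 := by
    rw [← pow_succ]
    congr 1
    omega
  have hK : (0:ℤ) < 2 ^ (d - 1) := pow_pos (by norm_num) _
  set M := A * 2 ^ (d - 1) with hM
  set N := (A + 1) * 2 ^ (d - 1) with hN
  have hMN : N = M + 2 ^ (d - 1) := by rw [hM, hN]; ring
  have h1' : M * 2 ≤ a := by rw [hd2, ← mul_assoc] at h1; exact h1
  have h2' : a + 1 ≤ N * 2 := by rw [hd2, ← mul_assoc] at h2; exact h2
  omega

lemma parent_subset_of_subset {C D : DyadicCell} (h : C.toSet ⊆ D.toSet)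
    (hl : C.level < D.level) : (cellParent C).toSet ⊆ D.toSet := by
  rw [cell_subset_cell_iff] at h ⊢
  obtain ⟨h1, h2, h3, h4⟩ := h
  have hle : C.level ≤ D.level := le_of_lt hl
  have hle' : C.level + 1 ≤ D.level := by omega
  have hd1 : 1 ≤ (D.level - C.level).toNat := by omega
  have hdd : (D.level - (C.level + 1)).toNat = (D.level - C.level).toNat - 1 := by omega
  have cast1 : ∀ a : ℤ, ((a:ℝ) + 1) = ((a + 1 : ℤ) : ℝ) := by intro a; push_cast; ring
  rw [cast1, cast1] at h2 h4
  rw [coord_to_int hle] at h1 h3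
  rw [coord_to_int' hle] at h2 h4
  have ia := int_parent_step' hd1 h1 h2
  have ib := int_parent_step' hd1 h3 h4
  refine ⟨?_, ?_, ?_, ?_⟩
  · show (D.a:ℝ) * 2 ^ D.level ≤ ((C.a / 2 : ℤ) : ℝ) * 2 ^ (C.level + 1)
    rw [coord_to_int hle', hdd]
    exact ia.1
  · show (((C.a / 2 : ℤ) : ℝ) + 1) * 2 ^ (C.level + 1) ≤ ((D.a:ℝ) + 1) * 2 ^ D.level
    rw [cast1, cast1, coord_to_int' hle', hdd]
    exact ia.2
  · show (D.b:ℝ) * 2 ^ D.level ≤ ((C.b / 2 : ℤ) : ℝ) * 2 ^ (C.level + 1)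
    rw [coord_to_int hle', hdd]
    exact ib.1
  · show (((C.b / 2 : ℤ) : ℝ) + 1) * 2 ^ (C.level + 1) ≤ ((D.b:ℝ) + 1) * 2 ^ D.level
    rw [cast1, cast1, coord_to_int' hle', hdd]
    exact ib.2

/-- every cell containing `C` is an iterated parent of `C` -/
lemma subset_anc_exists_aux : ∀ (k : ℕ) (C A : DyadicCell), (A.level - C.level).toNat ≤ k →
    C.toSet ⊆ A.toSet → ∃ n, A = cellAnc C n := by
  intro k
  induction k with
  | zero =>
      intro C A hk h
      have hle := level_le_of_subset h
      have : C.level = A.level := by omega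
      exact ⟨0, (eq_of_subset_of_level_eq h this).symm⟩
  | succ k ih =>
      intro C A hk h
      have hle := level_le_of_subset h
      by_cases he : C.level = A.level
      · exact ⟨0, (eq_of_subset_of_level_eq h he).symm⟩
      · have hlt : C.level < A.level := lt_of_le_of_ne hle he
        obtain ⟨n, hn⟩ := ih (cellParent C) A (by show (A.level - (C.level + 1)).toNat ≤ k; omega)
          (parent_subset_of_subset h hlt)
        exact ⟨n + 1, by rw [hn, cellAnc_parent]⟩

lemma subset_anc_exists {C A : DyadicCell} (h : C.toSet ⊆ A.toSet) : ∃ n, A = cellAnc C n :=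
  subset_anc_exists_aux (A.level - C.level).toNat C A (le_refl _) h

lemma cell_subset_of_side_le {X A B : DyadicCell} (hXA : X.toSet ⊆ A.toSet)
    (hXB : X.toSet ⊆ B.toSet) (hs : A.side ≤ B.side) : A.toSet ⊆ B.toSet := by
  obtain ⟨n, rfl⟩ := subset_anc_exists hXA
  obtain ⟨m, rfl⟩ := subset_anc_exists hXB
  have hl : (cellAnc X n).level ≤ (cellAnc X m).level := two_zpow_le_rev hs
  rw [cellAnc_level, cellAnc_level] at hl
  exact cellAnc_le_subset X (by omega)

lemma cell_eq_of_side_eq {X A B : DyadicCell} (hXA : X.toSet ⊆ A.toSet)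
    (hXB : X.toSet ⊆ B.toSet) (hs : A.side = B.side) : A = B := by
  have h1 := cell_subset_of_side_le hXA hXB (le_of_eq hs)
  have h2 := level_le_of_subset h1
  exact eq_of_subset_of_level_eq h1 (by
    have := level_le_of_subset (cell_subset_of_side_le hXB hXA (le_of_eq hs.symm))
    omega)

end Anc

section Storing

lemma cell_in_square_side {C : DyadicCell} {σ : Square} (h : C.toSet ⊆ σ.toSet) :
    C.side ≤ σ.s := by
  rw [cell_subset_square_iff] at h
  obtain ⟨h1, h2, -, -⟩ := h
  have e : ((C.a : ℝ) + 1) * 2 ^ C.level = C.a * 2 ^ C.level + 2 ^ C.level := by ring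
  show (2:ℝ) ^ C.level ≤ σ.s
  linarith

lemma center_mem_iff {σ : Square} {C : DyadicCell} :
    σ.center ∈ C.toSet ↔ (C.a : ℝ) * 2 ^ C.level ≤ σ.x + σ.s / 2
      ∧ σ.x + σ.s / 2 ≤ ((C.a : ℝ) + 1) * 2 ^ C.level
      ∧ (C.b : ℝ) * 2 ^ C.level ≤ σ.y + σ.s / 2
      ∧ σ.y + σ.s / 2 ≤ ((C.b : ℝ) + 1) * 2 ^ C.level := by
  rw [cell_toSet, Square.center, mem_box]

lemma sc_quarter {σ : Square} {C : DyadicCell} (hsc : IsStoringCell σ C) :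
    σ.s < 4 * C.side := by
  obtain ⟨l, hl1, hl2⟩ := exists_mem_Ico_zpow (by linarith [σ.s_pos] : (0:ℝ) < σ.s / 2)
    (by norm_num : (1:ℝ) < 2)
  set g := (2:ℝ) ^ l with hg
  have hgpos : 0 < g := two_zpow_pos l
  have hll : (2:ℝ) ^ (l + 1) = 2 * g := by rw [zpow_add_one₀ (by norm_num : (2:ℝ) ≠ 0)]; ring
  have hl2' : σ.s / 2 < 2 * g := by rw [← hll]; exact hl2
  set cx := σ.x + σ.s / 2 with hcx
  set cy := σ.y + σ.s / 2 with hcy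
  set D : DyadicCell := ⟨l, ⌊cx / g⌋, ⌊cy / g⌋⟩ with hD
  have fx1 : (⌊cx / g⌋ : ℝ) * g ≤ cx := (le_div_iff₀ hgpos).1 (Int.floor_le _)
  have fx2 : cx < ((⌊cx / g⌋ : ℝ) + 1) * g := (div_lt_iff₀ hgpos).1 (Int.lt_floor_add_one _)
  have fy1 : (⌊cy / g⌋ : ℝ) * g ≤ cy := (le_div_iff₀ hgpos).1 (Int.floor_le _)
  have fy2 : cy < ((⌊cy / g⌋ : ℝ) + 1) * g := (div_lt_iff₀ hgpos).1 (Int.lt_floor_add_one _)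
  have hmem : σ.center ∈ D.toSet := by
    rw [center_mem_iff]
    exact ⟨fx1, le_of_lt fx2, fy1, le_of_lt fy2⟩
  have hsub : D.toSet ⊆ σ.toSet := by
    rw [cell_subset_square_iff]
    refine ⟨by linarith, by linarith, by linarith, by linarith⟩
  have := hsc.2.2 D hmem hsub
  have : g ≤ C.side := this
  linarith

lemma sc_side_le {σ : Square} {C : DyadicCell} (hsc : IsStoringCell σ C) : C.side ≤ σ.s :=
  cell_in_square_side hsc.2.1

lemma sc_square_subset_scale5 {σ : Square} {C : DyadicCell} (hsc : IsStoringCell σ C) :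
    σ.toSet ⊆ C.scale5 := by
  have hq := sc_quarter hsc
  have hm := center_mem_iff.1 hsc.1
  have hgpos := two_zpow_pos C.level
  rw [square_subset_scale5_iff]
  show ((C.a:ℝ) - 2) * 2 ^ C.level ≤ σ.x ∧ σ.x + σ.s ≤ ((C.a:ℝ) + 3) * 2 ^ C.level ∧
    ((C.b:ℝ) - 2) * 2 ^ C.level ≤ σ.y ∧ σ.y + σ.s ≤ ((C.b:ℝ) + 3) * 2 ^ C.level
  have hCs : C.side = (2:ℝ) ^ C.level := rfl
  rw [hCs] at hq
  obtain ⟨m1, m2, m3, m4⟩ := hm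
  constructor
  · nlinarith
  constructor
  · nlinarith
  constructor
  · nlinarith
  · nlinarith

lemma cell_subset_scale5 (C : DyadicCell) : C.toSet ⊆ C.scale5 := by
  rw [cell_toSet, DyadicCell.scale5, box_subset_iff (cell_lr C) (cell_bt C)]
  have := two_zpow_pos C.level
  refine ⟨by nlinarith, by nlinarith, by nlinarith, by nlinarith⟩

end Storing

section Frontier

lemma front_of_preconnected {s : Set (ℝ × ℝ)} (hs : IsPreconnected s) (β : Square)
    (h1 : (s ∩ β.toSet).Nonempty) (h2 : ∃ q ∈ s, q ∉ interior β.toSet) :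
    (s ∩ frontier β.toSet).Nonempty := by
  by_contra hemp
  rw [Set.not_nonempty_iff_eq_empty] at hemp
  have hfr : ∀ x ∈ s, x ∉ frontier β.toSet := by
    intro x hx hfx
    have : x ∈ s ∩ frontier β.toSet := ⟨hx, hfx⟩
    rw [hemp] at this
    exact this
  have hU : IsOpen (interior β.toSet) := isOpen_interior
  have hV : IsOpen (β.toSetᶜ) := (square_closed β).isOpen_compl
  have hsub : s ⊆ interior β.toSet ∪ β.toSetᶜ := by
    intro x hx
    by_cases hxβ : x ∈ β.toSet
    · left
      by_contra hxint
      exact hfr x hx ⟨subset_closure hxβ, hxint⟩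
    · right; exact hxβ
  obtain ⟨p, hp1, hp2⟩ := h1
  have hpint : p ∈ interior β.toSet := by
    by_contra hpint
    exact hfr p hp1 ⟨subset_closure hp2, hpint⟩
  obtain ⟨q, hq1, hq2⟩ := h2
  have hqc : q ∈ β.toSetᶜ := by
    intro hqβ
    exact hfr q hq1 ⟨subset_closure hqβ, hq2⟩
  obtain ⟨z, hz1, hz2, hz3⟩ := hs _ _ hU hV hsub ⟨p, hp1, hpint⟩ ⟨q, hq1, hqc⟩
  exact hz3 (interior_subset hz2)

lemma mem_frontier_xr (τ : Square) {y : ℝ} (hy : τ.y ≤ y ∧ y ≤ τ.y + τ.s) :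
    ((τ.x + τ.s, y) : ℝ × ℝ) ∈ frontier τ.toSet := by
  constructor
  · apply subset_closure
    rw [Square.toSet, mem_box]
    exact ⟨square_lr τ, le_refl _, hy.1, hy.2⟩
  · rw [square_interior]
    intro h
    rw [Set.mem_prod] at h
    exact lt_irrefl _ h.1.2

lemma mem_frontier_xl (τ : Square) {y : ℝ} (hy : τ.y ≤ y ∧ y ≤ τ.y + τ.s) :
    ((τ.x, y) : ℝ × ℝ) ∈ frontier τ.toSet := by
  constructor
  · apply subset_closure
    rw [Square.toSet, mem_box]
    exact ⟨le_refl _, square_lr τ, hy.1, hy.2⟩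
  · rw [square_interior]
    intro h
    rw [Set.mem_prod] at h
    exact lt_irrefl _ h.1.1

lemma mem_frontier_yt (τ : Square) {x : ℝ} (hx : τ.x ≤ x ∧ x ≤ τ.x + τ.s) :
    ((x, τ.y + τ.s) : ℝ × ℝ) ∈ frontier τ.toSet := by
  constructor
  · apply subset_closure
    rw [Square.toSet, mem_box]
    exact ⟨hx.1, hx.2, square_bt τ, le_refl _⟩
  · rw [square_interior]
    intro h
    rw [Set.mem_prod] at h
    exact lt_irrefl _ h.2.2

lemma mem_frontier_yb (τ : Square) {x : ℝ} (hx : τ.x ≤ x ∧ x ≤ τ.x + τ.s) :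
    ((x, τ.y) : ℝ × ℝ) ∈ frontier τ.toSet := by
  constructor
  · apply subset_closure
    rw [Square.toSet, mem_box]
    exact ⟨hx.1, hx.2, le_refl _, square_bt τ⟩
  · rw [square_interior]
    intro h
    rw [Set.mem_prod] at h
    exact lt_irrefl _ h.2.1

end Frontier

section Reach

lemma reach1D {l lc : ℤ} (hl : l ≤ lc) (aA ac : ℤ) {υl υr τr : ℝ}
    (hAl : υl ≤ (aA : ℝ) * 2 ^ l) (hAr : ((aA : ℝ) + 1) * 2 ^ l ≤ υr)
    (hul : (ac : ℝ) * 2 ^ lc ≤ (υl + υr) / 2) (hur : (υl + υr) / 2 ≤ ((ac : ℝ) + 1) * 2 ^ lc)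
    (hbig : υr - υl < 4 * 2 ^ lc)
    (hτ1 : ((aA : ℝ) + 1) * 2 ^ l ≤ τr) (hτ2 : τr < ((aA : ℝ) + 2) * 2 ^ l) :
    ((ac : ℝ) - 2) * 2 ^ lc ≤ τr ∧ τr ≤ ((ac : ℝ) + 3) * 2 ^ lc := by
  have hg := two_zpow_pos l
  have hh := two_zpow_pos lc
  constructor
  · nlinarith
  · have hru : υr < ((ac : ℝ) + 3) * 2 ^ lc := by nlinarith
    have h2 : ((aA : ℝ) + 1) * 2 ^ l < ((ac : ℝ) + 3) * 2 ^ lc := lt_of_le_of_lt hAr hru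
    have c1 : ((aA : ℝ) + 1) * 2 ^ l = ((aA + 1 : ℤ) : ℝ) * 2 ^ l := by push_cast; ring
    have c2 : ((ac : ℝ) + 3) * 2 ^ lc = ((ac + 3 : ℤ) : ℝ) * 2 ^ lc := by push_cast; ring
    have h2' : (aA + 1 : ℤ) < (ac + 3) * 2 ^ ((lc - l).toNat) := by
      rw [c1, c2, grid_cast hl (ac + 3)] at h2
      exact grid_lt_iff.1 h2
    have h3 : ((aA : ℝ) + 2) * 2 ^ l ≤ ((ac : ℝ) + 3) * 2 ^ lc := by
      have hint : (aA + 2 : ℤ) ≤ (ac + 3) * 2 ^ ((lc - l).toNat) := by omega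
      calc ((aA : ℝ) + 2) * 2 ^ l = ((aA + 2 : ℤ) : ℝ) * 2 ^ l := by push_cast; ring
        _ ≤ (((ac + 3) * 2 ^ ((lc - l).toNat) : ℤ) : ℝ) * 2 ^ l := grid_le_iff.2 hint
        _ = ((ac + 3 : ℤ) : ℝ) * 2 ^ lc := (grid_cast hl (ac + 3)).symm
        _ = ((ac : ℝ) + 3) * 2 ^ lc := by push_cast; ring
    linarith

lemma reach1D_left {l lc : ℤ} (hl : l ≤ lc) (aA ac : ℤ) {υl υr τl : ℝ}
    (hAl : υl ≤ (aA : ℝ) * 2 ^ l) (hAr : ((aA : ℝ) + 1) * 2 ^ l ≤ υr)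
    (hul : (ac : ℝ) * 2 ^ lc ≤ (υl + υr) / 2) (hur : (υl + υr) / 2 ≤ ((ac : ℝ) + 1) * 2 ^ lc)
    (hbig : υr - υl < 4 * 2 ^ lc)
    (hτ1 : τl ≤ (aA : ℝ) * 2 ^ l) (hτ2 : ((aA : ℝ) - 1) * 2 ^ l < τl) :
    ((ac : ℝ) - 2) * 2 ^ lc ≤ τl ∧ τl ≤ ((ac : ℝ) + 3) * 2 ^ lc := by
  have h := reach1D hl (-aA - 1) (-ac - 1) (υl := -υr) (υr := -υl) (τr := -τl)
    (by push_cast; linarith) (by push_cast; linarith) (by push_cast; linarith)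
    (by push_cast; linarith) (by push_cast; linarith) (by push_cast; linarith)
    (by push_cast; linarith)
  obtain ⟨ha, hb⟩ := h
  push_cast at ha hb
  constructor <;> linarith

lemma parent_r_le {l : ℤ} (a : ℤ) :
    (((a / 2 : ℤ) : ℝ) + 1) * 2 ^ (l + 1) ≤ ((a : ℝ) + 2) * 2 ^ l := by
  have c1 : (((a / 2 : ℤ) : ℝ) + 1) * 2 ^ (l + 1) = ((a / 2 + 1 : ℤ) : ℝ) * 2 ^ (l + 1) := by
    push_cast; ring
  have c2 : ((a : ℝ) + 2) * 2 ^ l = ((a + 2 : ℤ) : ℝ) * 2 ^ l := by push_cast; ring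
  rw [c1, c2, grid_cast (by omega : l ≤ l + 1) (a / 2 + 1),
    show (l + 1 - l).toNat = 1 by omega]
  exact grid_le_iff.2 (by omega)

lemma parent_l_ge {l : ℤ} (a : ℤ) :
    ((a : ℝ) - 1) * 2 ^ l ≤ ((a / 2 : ℤ) : ℝ) * 2 ^ (l + 1) := by
  have c1 : ((a : ℝ) - 1) * 2 ^ l = ((a - 1 : ℤ) : ℝ) * 2 ^ l := by push_cast; ring
  rw [c1, grid_cast (by omega : l ≤ l + 1) (a / 2), show (l + 1 - l).toNat = 1 by omega]
  exact grid_le_iff.2 (by omega)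

lemma step1 {υ : Square} {A Cu : DyadicCell} (hsc : IsStoringCell υ Cu)
    (hAυ : A.toSet ⊆ υ.toSet) : A.side ≤ Cu.side := by
  by_cases hbig : 2 * A.side ≤ υ.s
  · have h4 : υ.s < 4 * Cu.side := sc_quarter hsc
    have hAs : A.side = (2:ℝ) ^ A.level := rfl
    have hCs : Cu.side = (2:ℝ) ^ Cu.level := rfl
    have e : (2:ℝ) ^ A.level = 2 ^ (A.level - 1) * 2 := by
      rw [← zpow_add_one₀ (by norm_num : (2:ℝ) ≠ 0)]
      congr 1
      omega
    have hlt : (2:ℝ) ^ (A.level - 1) < 2 ^ Cu.level := by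
      rw [hAs, e] at hbig
      rw [hCs] at h4
      linarith
    have hlev : A.level - 1 < Cu.level := two_zpow_lt_rev hlt
    rw [hAs, hCs]
    exact two_zpow_le (by omega)
  · push_neg at hbig
    have hmem : υ.center ∈ A.toSet := by
      rw [center_mem_iff]
      obtain ⟨h1, h2, h3, h4⟩ := cell_subset_square_iff.1 hAυ
      have hg := two_zpow_pos A.level
      have hAs : A.side = (2:ℝ) ^ A.level := rfl
      rw [hAs] at hbig
      have e1 : ((A.a : ℝ) + 1) * 2 ^ A.level = A.a * 2 ^ A.level + 2 ^ A.level := by ring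
      have e2 : ((A.b : ℝ) + 1) * 2 ^ A.level = A.b * 2 ^ A.level + 2 ^ A.level := by ring
      refine ⟨by linarith, by linarith, by linarith, by linarith⟩
    exact hsc.2.2 A hmem hAυ

lemma S1frontier {A : DyadicCell} {υ τ : Square} {Cu : DyadicCell}
    (hscu : IsStoringCell υ Cu) (hAυ : A.toSet ⊆ υ.toSet) (hAτ : A.toSet ⊆ τ.toSet)
    (htop : ¬ (cellParent A).toSet ⊆ τ.toSet) :
    (Cu.scale5 ∩ frontier τ.toSet).Nonempty := by
  have hstep : A.side ≤ Cu.side := step1 hscu hAυ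
  have hl : A.level ≤ Cu.level := two_zpow_le_rev hstep
  obtain ⟨hυ1, hυ2, hυ3, hυ4⟩ := cell_subset_square_iff.1 hAυ
  obtain ⟨hτ1, hτ2, hτ3, hτ4⟩ := cell_subset_square_iff.1 hAτ
  obtain ⟨hc1, hc2, hc3, hc4⟩ := center_mem_iff.1 hscu.1
  have hq : υ.s < 4 * Cu.side := sc_quarter hscu
  have hCs : Cu.side = (2:ℝ) ^ Cu.level := rfl
  rw [hCs] at hq
  obtain ⟨h51, h52, h53, h54⟩ := square_subset_scale5_iff.1 (sc_square_subset_scale5 hscu)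
  have hgA := two_zpow_pos A.level
  -- common facts
  have hxm : (Cu.a : ℝ) * 2 ^ Cu.level ≤ (υ.x + (υ.x + υ.s)) / 2 := by linarith
  have hxm' : (υ.x + (υ.x + υ.s)) / 2 ≤ ((Cu.a : ℝ) + 1) * 2 ^ Cu.level := by linarith
  have hym : (Cu.b : ℝ) * 2 ^ Cu.level ≤ (υ.y + (υ.y + υ.s)) / 2 := by linarith
  have hym' : (υ.y + (υ.y + υ.s)) / 2 ≤ ((Cu.b : ℝ) + 1) * 2 ^ Cu.level := by linarith
  have hbigx : (υ.x + υ.s) - υ.x < 4 * 2 ^ Cu.level := by linarith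
  have hbigy : (υ.y + υ.s) - υ.y < 4 * 2 ^ Cu.level := by linarith
  -- y-coordinate of A is inside the y-range of 5Cu
  have hyA1 : ((Cu.b : ℝ) - 2) * 2 ^ Cu.level ≤ (A.b : ℝ) * 2 ^ A.level := by linarith
  have hyA2 : (A.b : ℝ) * 2 ^ A.level ≤ ((Cu.b : ℝ) + 3) * 2 ^ Cu.level := by
    have e : ((A.b : ℝ) + 1) * 2 ^ A.level = A.b * 2 ^ A.level + 2 ^ A.level := by ring
    linarith
  have hxA1 : ((Cu.a : ℝ) - 2) * 2 ^ Cu.level ≤ (A.a : ℝ) * 2 ^ A.level := by linarith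
  have hxA2 : (A.a : ℝ) * 2 ^ A.level ≤ ((Cu.a : ℝ) + 3) * 2 ^ Cu.level := by
    have e : ((A.a : ℝ) + 1) * 2 ^ A.level = A.a * 2 ^ A.level + 2 ^ A.level := by ring
    linarith
  have hyAτ : τ.y ≤ (A.b : ℝ) * 2 ^ A.level ∧ (A.b : ℝ) * 2 ^ A.level ≤ τ.y + τ.s := by
    have e : ((A.b : ℝ) + 1) * 2 ^ A.level = A.b * 2 ^ A.level + 2 ^ A.level := by ring
    constructor <;> linarith
  have hxAτ : τ.x ≤ (A.a : ℝ) * 2 ^ A.level ∧ (A.a : ℝ) * 2 ^ A.level ≤ τ.x + τ.s := by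
    have e : ((A.a : ℝ) + 1) * 2 ^ A.level = A.a * 2 ^ A.level + 2 ^ A.level := by ring
    constructor <;> linarith
  rw [cell_subset_square_iff] at htop
  rw [not_and_or, not_and_or, not_and_or] at htop
  push_neg at htop
  have hplevel : (cellParent A).level = A.level + 1 := rfl
  rcases htop with hcase | hcase | hcase | hcase
  · -- exit left in x : τ.x > parent left
    have hx2 : ((A.a : ℝ) - 1) * 2 ^ A.level < τ.x :=
      lt_of_le_of_lt (parent_l_ge A.a) hcase
    have hr := reach1D_left hl A.a Cu.a hυ1 hυ2 hxm hxm' hbigx hτ1 hx2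
    refine ⟨(τ.x, (A.b : ℝ) * 2 ^ A.level), ?_, mem_frontier_xl τ hyAτ⟩
    rw [DyadicCell.scale5, mem_box]
    exact ⟨hr.1, hr.2, hyA1, hyA2⟩
  · -- exit right in x
    have hx2 : τ.x + τ.s < ((A.a : ℝ) + 2) * 2 ^ A.level :=
      lt_of_lt_of_le hcase (parent_r_le A.a)
    have hr := reach1D hl A.a Cu.a hυ1 hυ2 hxm hxm' hbigx hτ2 hx2
    refine ⟨(τ.x + τ.s, (A.b : ℝ) * 2 ^ A.level), ?_, mem_frontier_xr τ hyAτ⟩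
    rw [DyadicCell.scale5, mem_box]
    exact ⟨hr.1, hr.2, hyA1, hyA2⟩
  · -- exit bottom in y
    have hy2 : ((A.b : ℝ) - 1) * 2 ^ A.level < τ.y :=
      lt_of_le_of_lt (parent_l_ge A.b) hcase
    have hr := reach1D_left hl A.b Cu.b hυ3 hυ4 hym hym' hbigy hτ3 hy2
    refine ⟨((A.a : ℝ) * 2 ^ A.level, τ.y), ?_, mem_frontier_yb τ hxAτ⟩
    rw [DyadicCell.scale5, mem_box]
    exact ⟨hxA1, hxA2, hr.1, hr.2⟩
  · -- exit top in y
    have hy2 : τ.y + τ.s < ((A.b : ℝ) + 2) * 2 ^ A.level :=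
      lt_of_lt_of_le hcase (parent_r_le A.b)
    have hr := reach1D hl A.b Cu.b hυ3 hυ4 hym hym' hbigy hτ4 hy2
    refine ⟨((A.a : ℝ) * 2 ^ A.level, τ.y + τ.s), ?_, mem_frontier_yt τ hxAτ⟩
    rw [DyadicCell.scale5, mem_box]
    exact ⟨hxA1, hxA2, hr.1, hr.2⟩

end Reach

section Graph

lemma proxyAdj_symm {S : Finset Square} {c : Square → DyadicCell} {C₁ C₂ : DyadicCell}
    (h : ProxyAdj S c C₁ C₂) : ProxyAdj S c C₂ C₁ := by
  obtain ⟨hne, h1, h2, γ, hγ, β, hβ, hint, hP⟩ := h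
  exact ⟨hne.symm, h2, h1, β, hβ, γ, hγ, by rwa [Set.inter_comm], hP.symm⟩

lemma proxyConn_symm {S : Finset Square} {c : Square → DyadicCell} {C₁ C₂ : DyadicCell}
    (h : ProxyConn S c C₁ C₂) : ProxyConn S c C₂ C₁ :=
  (@Relation.ReflTransGen.stdSymm _ (ProxyAdj S c) ⟨fun _ _ hab => proxyAdj_symm hab⟩).symm _ _ h

lemma proxy_step {S : Finset Square} {c : Square → DyadicCell} {C₁ C₂ : DyadicCell}
    (γ β : Square) (hγ : γ ∈ S) (hβ : β ∈ S) (hγc : c γ = C₁) (hβc : c β = C₂)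
    (hint : (γ.toSet ∩ β.toSet).Nonempty)
    (hP : C₂ ∈ calP S c γ ∨ C₁ ∈ calP S c β) : ProxyConn S c C₁ C₂ := by
  by_cases he : C₁ = C₂
  · rw [he]
    exact Relation.ReflTransGen.refl
  · exact Relation.ReflTransGen.single
      ⟨he, ⟨γ, hγ, hγc⟩, ⟨β, hβ, hβc⟩, γ, ⟨hγ, hγc⟩, β, ⟨hβ, hβc⟩, hint, hP⟩

lemma lemY (S : Finset Square) (c : Square → DyadicCell)
    (hc : ∀ σ ∈ S, IsStoringCell σ (c σ))
    {α τ w : Square} (hα : α ∈ S) (hτ : τ ∈ S) (hw : w ∈ S)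
    {A : DyadicCell} (hA1 : (c α).toSet ⊆ A.toSet) (hAτ : A.toSet ⊆ τ.toSet)
    (hA3 : ∀ A' : DyadicCell, (c α).toSet ⊆ A'.toSet →
      (∃ t ∈ S, A'.toSet ⊆ t.toSet) → A'.side ≤ A.side)
    (hαw : α.toSet ⊆ w.toSet)
    (hexp : ∀ β ∈ S, ¬ ((c w).scale5 ⊆ interior β.toSet)) :
    ProxyConn S c (c τ) (c w) := by
  classical
  have htop : ∀ β ∈ S, ¬ (cellParent A).toSet ⊆ β.toSet := by
    intro β hβ hsub
    have h1 := hA3 (cellParent A) (hA1.trans (subset_cellParent A)) ⟨β, hβ, hsub⟩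
    rw [cellParent_side] at h1
    nlinarith [A.side_pos]
  set X := c α with hX
  have hX0 : X.toSet ⊆ w.toSet := ((hc α hα).2.1).trans hαw
  obtain ⟨N, hN⟩ := pow_unbounded_of_one_lt (w.s / X.side) (by norm_num : (1:ℝ) < 2)
  have hNb : ∀ k, N ≤ k → ¬ (cellAnc X k).toSet ⊆ w.toSet := by
    intro k hk hsub
    have h1 : (cellAnc X k).side ≤ w.s := cell_in_square_side hsub
    rw [cellAnc_side] at h1
    have h2 : (2:ℝ) ^ N ≤ 2 ^ k := pow_le_pow_right₀ (by norm_num) hk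
    have h3 := X.side_pos
    rw [div_lt_iff₀ h3] at hN
    nlinarith
  set P : ℕ → Prop := fun k => (cellAnc X k).toSet ⊆ w.toSet with hPdef
  have hP0 : P 0 := hX0
  set k0 := Nat.findGreatest P N with hk0
  have hPk : P k0 := Nat.findGreatest_spec (Nat.zero_le N) hP0
  have hPk1 : ¬ P (k0 + 1) := by
    rcases Nat.lt_or_ge N (k0 + 1) with hcase | hcase
    · exact hNb _ (by omega)
    · exact Nat.findGreatest_is_greatest (by omega) hcase
  set D := cellAnc X k0 with hD
  have hXD : X.toSet ⊆ D.toSet := subset_cellAnc X k0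
  have hDs : D.side ≤ A.side := hA3 D hXD ⟨w, hw, hPk⟩
  have hDA : D.toSet ⊆ A.toSet := cell_subset_of_side_le hXD hA1 hDs
  obtain ⟨p, hp⟩ := cell_nonempty D
  have hpw : p ∈ w.toSet := hPk hp
  have hpτ : p ∈ τ.toSet := hAτ (hDA hp)
  rcases eq_or_lt_of_le hDs with heq | hlt
  · -- D = A : A sits inside w as well
    have hDAeq : D = A := cell_eq_of_side_eq hXD hA1 heq
    have hAw : A.toSet ⊆ w.toSet := hDAeq ▸ hPk
    by_cases hside : (c w).side ≤ τ.s
    · have hf := S1frontier (hc w hw) hAw hAτ (htop τ hτ)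
      exact proxy_step τ w hτ hw rfl rfl ⟨p, hpτ, hpw⟩ (Or.inl ⟨⟨w, hw, rfl⟩, hside, hf⟩)
    · push_neg at hside
      have hf := S1frontier (hc τ hτ) hAτ hAw (htop w hw)
      have hs2 : (c τ).side ≤ w.s :=
        le_trans (sc_side_le (hc τ hτ)) (le_trans (le_of_lt hside) (sc_side_le (hc w hw)))
      exact proxy_step τ w hτ hw rfl rfl ⟨p, hpτ, hpw⟩ (Or.inr ⟨⟨τ, hτ, rfl⟩, hs2, hf⟩)
  · -- D strictly smaller than A
    have hlev : D.level < A.level := two_zpow_lt_rev hlt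
    have hPDA : (cellParent D).toSet ⊆ A.toSet := by
      have hside : (cellParent D).side ≤ A.side := by
        rw [cellParent_side]
        show 2 * (2:ℝ) ^ D.level ≤ 2 ^ A.level
        have : (2:ℝ) ^ (D.level + 1) = 2 ^ D.level * 2 :=
          zpow_add_one₀ (by norm_num : (2:ℝ) ≠ 0) _
        have h2 := two_zpow_le (show D.level + 1 ≤ A.level by omega)
        linarith
      exact cell_subset_of_side_le (hXD.trans (subset_cellParent D)) hA1 hside
    have hq : ∃ q, q ∈ τ.toSet ∧ q ∉ w.toSet := by
      have hnp : ¬ (cellParent D).toSet ⊆ w.toSet := by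
        have he : cellParent D = cellAnc X (k0 + 1) := rfl
        rw [he]
        exact hPk1
      obtain ⟨q, hq1, hq2⟩ := Set.not_subset.1 hnp
      exact ⟨q, (hPDA.trans hAτ) hq1, hq2⟩
    by_cases hside : (c τ).side ≤ w.s
    · have hfront : (τ.toSet ∩ frontier w.toSet).Nonempty := by
        apply front_of_preconnected (square_preconnected τ) w ⟨p, hpτ, hpw⟩
        obtain ⟨q, hq1, hq2⟩ := hq
        exact ⟨q, hq1, fun hint2 => hq2 (interior_subset hint2)⟩
      have hf5 : ((c τ).scale5 ∩ frontier w.toSet).Nonempty := by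
        obtain ⟨z, hz1, hz2⟩ := hfront
        exact ⟨z, sc_square_subset_scale5 (hc τ hτ) hz1, hz2⟩
      exact proxy_step τ w hτ hw rfl rfl ⟨p, hpτ, hpw⟩ (Or.inr ⟨⟨τ, hτ, rfl⟩, hside, hf5⟩)
    · push_neg at hside
      have hs2 : (c w).side ≤ τ.s :=
        le_trans (sc_side_le (hc w hw)) (le_trans (le_of_lt hside) (sc_side_le (hc τ hτ)))
      have hpin5 : p ∈ (c w).scale5 := sc_square_subset_scale5 (hc w hw) hpw
      have hq5 : ∃ z ∈ (c w).scale5, z ∉ interior τ.toSet := by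
        obtain ⟨z, hz1, hz2⟩ := Set.not_subset.1 (hexp τ hτ)
        exact ⟨z, hz1, hz2⟩
      have hfront := front_of_preconnected (scale5_preconnected (c w)) τ ⟨p, hpin5, hpτ⟩ hq5
      exact proxy_step τ w hτ hw rfl rfl ⟨p, hpτ, hpw⟩ (Or.inl ⟨⟨w, hw, rfl⟩, hs2, hfront⟩)

lemma square_lt_of_subset_interior {α β : Square} (h : α.toSet ⊆ interior β.toSet) :
    α.s < β.s := by
  rw [square_interior] at h
  have h1 : ((α.x, α.y) : ℝ × ℝ) ∈ α.toSet := by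
    rw [Square.toSet, mem_box]
    exact ⟨le_refl _, square_lr α, le_refl _, square_bt α⟩
  have h2 : ((α.x + α.s, α.y) : ℝ × ℝ) ∈ α.toSet := by
    rw [Square.toSet, mem_box]
    exact ⟨square_lr α, le_refl _, le_refl _, square_bt α⟩
  have m1 := h h1
  have m2 := h h2
  rw [Set.mem_prod] at m1 m2
  obtain ⟨mx1, -⟩ := m1
  obtain ⟨mx2, -⟩ := m2
  rw [Set.mem_Ioo] at mx1 mx2
  dsimp only at mx1 mx2
  linarith [mx1.1, mx2.2]

lemma exists_exposed (S : Finset Square) (c : Square → DyadicCell)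
    (hc : ∀ σ ∈ S, IsStoringCell σ (c σ)) :
    ∀ (n : ℕ) (α : Square), α ∈ S → (S.filter (fun β => α.s < β.s)).card ≤ n →
    ∃ w ∈ S, α.toSet ⊆ w.toSet ∧ ∀ β ∈ S, ¬ ((c w).scale5 ⊆ interior β.toSet) := by
  classical
  intro n
  induction n with
  | zero =>
      intro α hα hcard
      by_cases hexp : ∀ β ∈ S, ¬ ((c α).scale5 ⊆ interior β.toSet)
      · exact ⟨α, hα, subset_rfl, hexp⟩
      · exfalso
        push_neg at hexp
        obtain ⟨β, hβ, hsub⟩ := hexp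
        have hαβ : α.toSet ⊆ interior β.toSet :=
          (sc_square_subset_scale5 (hc α hα)).trans hsub
        have hlt : α.s < β.s := square_lt_of_subset_interior hαβ
        have hmem : β ∈ S.filter (fun γ => α.s < γ.s) := Finset.mem_filter.2 ⟨hβ, hlt⟩
        have := Finset.card_pos.2 ⟨β, hmem⟩
        omega
  | succ n ih =>
      intro α hα hcard
      by_cases hexp : ∀ β ∈ S, ¬ ((c α).scale5 ⊆ interior β.toSet)
      · exact ⟨α, hα, subset_rfl, hexp⟩
      · push_neg at hexp
        obtain ⟨β, hβ, hsub⟩ := hexp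
        have hαβint : α.toSet ⊆ interior β.toSet :=
          (sc_square_subset_scale5 (hc α hα)).trans hsub
        have hαβ : α.toSet ⊆ β.toSet := hαβint.trans interior_subset
        have hlt : α.s < β.s := square_lt_of_subset_interior hαβint
        have hss : S.filter (fun γ => β.s < γ.s) ⊂ S.filter (fun γ => α.s < γ.s) := by
          constructor
          · intro γ hγ
            rw [Finset.mem_filter] at hγ ⊢
            exact ⟨hγ.1, lt_trans hlt hγ.2⟩
          · intro hsub2
            have : β ∈ S.filter (fun γ => β.s < γ.s) :=
              hsub2 (Finset.mem_filter.2 ⟨hβ, hlt⟩)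
            rw [Finset.mem_filter] at this
            exact lt_irrefl _ this.2
        have hcard2 : (S.filter (fun γ => β.s < γ.s)).card ≤ n := by
          have := Finset.card_lt_card hss
          omega
        obtain ⟨w, hw, hsub2, hexp2⟩ := ih β hβ hcard2
        exact ⟨w, hw, hαβ.trans hsub2, hexp2⟩

lemma core (S : Finset Square) (c : Square → DyadicCell)
    (hc : ∀ σ ∈ S, IsStoringCell σ (c σ))
    {σ ρ : Square} (hσ : σ ∈ S) (hρ : ρ ∈ S) (hint : (σ.toSet ∩ ρ.toSet).Nonempty)
    {Aσ : DyadicCell} {τσ : Square}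
    (hAσ1 : (c σ).toSet ⊆ Aσ.toSet)
    (hAσ3 : ∀ A' : DyadicCell, (c σ).toSet ⊆ A'.toSet →
      (∃ τ ∈ S, A'.toSet ⊆ τ.toSet) → A'.side ≤ Aσ.side)
    (hτσ1 : τσ ∈ S) (hτσ2 : Aσ.toSet ⊆ τσ.toSet)
    {Aρ : DyadicCell} {τρ : Square}
    (hAρ1 : (c ρ).toSet ⊆ Aρ.toSet)
    (hAρ3 : ∀ A' : DyadicCell, (c ρ).toSet ⊆ A'.toSet →
      (∃ τ ∈ S, A'.toSet ⊆ τ.toSet) → A'.side ≤ Aρ.side)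
    (hτρ1 : τρ ∈ S) (hτρ2 : Aρ.toSet ⊆ τρ.toSet) :
    ProxyConn S c (c τσ) (c τρ) := by
  classical
  obtain ⟨wσ, hwσS, hσw, hexpσ⟩ :=
    exists_exposed S c hc (S.filter (fun β => σ.s < β.s)).card σ hσ (le_refl _)
  obtain ⟨wρ, hwρS, hρw, hexpρ⟩ :=
    exists_exposed S c hc (S.filter (fun β => ρ.s < β.s)).card ρ hρ (le_refl _)
  have hY1 : ProxyConn S c (c τσ) (c wσ) :=
    lemY S c hc hσ hτσ1 hwσS hAσ1 hτσ2 hAσ3 hσw hexpσ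
  have hY2 : ProxyConn S c (c τρ) (c wρ) :=
    lemY S c hc hρ hτρ1 hwρS hAρ1 hτρ2 hAρ3 hρw hexpρ
  obtain ⟨p, hp1, hp2⟩ := hint
  have hpwσ : p ∈ wσ.toSet := hσw hp1
  have hpwρ : p ∈ wρ.toSet := hρw hp2
  have hmid : ProxyConn S c (c wσ) (c wρ) := by
    rcases le_total ((c wσ).side) ((c wρ).side) with hle | hle
    · have hss : (c wσ).side ≤ wρ.s := le_trans hle (sc_side_le (hc wρ hwρS))
      have hfront := front_of_preconnected (scale5_preconnected (c wσ)) wρ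
        ⟨p, sc_square_subset_scale5 (hc wσ hwσS) hpwσ, hpwρ⟩
        (by obtain ⟨z, hz1, hz2⟩ := Set.not_subset.1 (hexpσ wρ hwρS); exact ⟨z, hz1, hz2⟩)
      exact proxyConn_symm (proxy_step wρ wσ hwρS hwσS rfl rfl ⟨p, hpwρ, hpwσ⟩
        (Or.inl ⟨⟨wσ, hwσS, rfl⟩, hss, hfront⟩))
    · have hss : (c wρ).side ≤ wσ.s := le_trans hle (sc_side_le (hc wσ hwσS))
      have hfront := front_of_preconnected (scale5_preconnected (c wρ)) wσ
        ⟨p, sc_square_subset_scale5 (hc wρ hwρS) hpwρ, hpwσ⟩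
        (by obtain ⟨z, hz1, hz2⟩ := Set.not_subset.1 (hexpρ wσ hwσS); exact ⟨z, hz1, hz2⟩)
      exact proxy_step wσ wρ hwσS hwρS rfl rfl ⟨p, hpwσ, hpwρ⟩
        (Or.inl ⟨⟨wρ, hwρS, rfl⟩, hss, hfront⟩)
  exact hY1.trans (hmid.trans (proxyConn_symm hY2))

lemma exists_valid (S : Finset Square) (c : Square → DyadicCell)
    (hc : ∀ σ ∈ S, IsStoringCell σ (c σ)) {α : Square} (hα : α ∈ S) :
    ∃ (A : DyadicCell) (τ : Square), (c α).toSet ⊆ A.toSet ∧ τ ∈ S ∧ A.toSet ⊆ τ.toSet ∧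
      ∀ A' : DyadicCell, (c α).toSet ⊆ A'.toSet →
        (∃ t ∈ S, A'.toSet ⊆ t.toSet) → A'.side ≤ A.side := by
  classical
  set X := c α with hX
  set M := S.sup' ⟨α, hα⟩ Square.s with hM
  obtain ⟨N, hN⟩ := pow_unbounded_of_one_lt (M / X.side) (by norm_num : (1:ℝ) < 2)
  set P : ℕ → Prop := fun k => ∃ t ∈ S, (cellAnc X k).toSet ⊆ t.toSet with hPdef
  haveI hPdec : DecidablePred P := Classical.decPred P
  have hP0 : P 0 := ⟨α, hα, (hc α hα).2.1⟩
  have hbound : ∀ k, P k → k < N := by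
    intro k hPk
    obtain ⟨t, ht, hsub⟩ := hPk
    have h1 : (cellAnc X k).side ≤ t.s := cell_in_square_side hsub
    rw [cellAnc_side] at h1
    have h2 : t.s ≤ M := Finset.le_sup' Square.s ht
    have h3 := X.side_pos
    rw [div_lt_iff₀ h3] at hN
    by_contra hcon
    push_neg at hcon
    have h4 : (2:ℝ) ^ N ≤ 2 ^ k := pow_le_pow_right₀ (by norm_num) hcon
    nlinarith
  set k0 := Nat.findGreatest P N with hk0
  have hPk : P k0 := Nat.findGreatest_spec (Nat.zero_le N) hP0
  obtain ⟨τ, hτ, hsub⟩ := hPk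
  refine ⟨cellAnc X k0, τ, subset_cellAnc X k0, hτ, hsub, ?_⟩
  intro A' hXA' hA'mem
  obtain ⟨k', rfl⟩ := subset_anc_exists hXA'
  have hk'N : k' < N := hbound k' hA'mem
  have hk'le : k' ≤ k0 := by
    by_contra hcon
    have hgt : k0 < k' := by omega
    have := Nat.findGreatest_is_greatest (P := P) (n := N) (k := k') (hk0 ▸ hgt) (by omega)
    exact this hA'mem
  rw [cellAnc_side, cellAnc_side]
  have h5 : (2:ℝ) ^ k' ≤ 2 ^ k0 := pow_le_pow_right₀ (by norm_num) hk'le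
  nlinarith [X.side_pos]

lemma ig_edge (S : Finset Square) {a b : Square} (ha : a ∈ S) (hb : b ∈ S)
    (h : (a.toSet ∩ b.toSet).Nonempty) : IGConn S a b := by
  by_cases he : a = b
  · rw [he]
    exact Relation.ReflTransGen.refl
  · exact Relation.ReflTransGen.single ⟨ha, hb, he, h⟩

lemma samecell_conn (S : Finset Square) (c : Square → DyadicCell)
    (hc : ∀ σ ∈ S, IsStoringCell σ (c σ)) {C : DyadicCell} {a b : Square}
    (ha : a ∈ S) (hb : b ∈ S) (hca : c a = C) (hcb : c b = C) : IGConn S a b := by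
  obtain ⟨p, hp⟩ := cell_nonempty C
  have hpa : p ∈ a.toSet := (hc a ha).2.1 (by rw [hca]; exact hp)
  have hpb : p ∈ b.toSet := (hc b hb).2.1 (by rw [hcb]; exact hp)
  exact ig_edge S ha hb ⟨p, hpa, hpb⟩

lemma proxy_to_ig (S : Finset Square) (c : Square → DyadicCell)
    (hc : ∀ σ ∈ S, IsStoringCell σ (c σ)) {C₁ C₂ : DyadicCell}
    (h : ProxyConn S c C₁ C₂) :
    ∀ a b : Square, a ∈ S → c a = C₁ → b ∈ S → c b = C₂ → IGConn S a b := by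
  induction h with
  | refl =>
      intro a b ha hca hb hcb
      exact samecell_conn S c hc ha hb hca hcb
  | tail hconn hadj ih =>
      intro a b ha hca hb hcb
      obtain ⟨hne, h1, h2, γ, hγ, β, hβ, hint, -⟩ := hadj
      obtain ⟨hγS, hγc⟩ := hγ
      obtain ⟨hβS, hβc⟩ := hβ
      have i1 := ih a γ ha hca hγS hγc
      have i2 := ig_edge S hγS hβS hint
      have i3 := samecell_conn S c hc hβS hb hβc hcb
      exact (i1.trans i2).trans i3

lemma igconn_to_proxy (S : Finset Square) (c : Square → DyadicCell)
    (hc : ∀ σ ∈ S, IsStoringCell σ (c σ)) (f : Square → DyadicCell) (g : Square → Square)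
    (hfg : ∀ α ∈ S, (c α).toSet ⊆ (f α).toSet ∧ g α ∈ S ∧ (f α).toSet ⊆ (g α).toSet ∧
      ∀ A' : DyadicCell, (c α).toSet ⊆ A'.toSet →
        (∃ t ∈ S, A'.toSet ⊆ t.toSet) → A'.side ≤ (f α).side)
    {a b : Square} (h : IGConn S a b) : ProxyConn S c (c (g a)) (c (g b)) := by
  induction h with
  | refl => exact Relation.ReflTransGen.refl
  | tail h1 h2 ih =>
      obtain ⟨hxS, hbS, hne, hint⟩ := h2
      obtain ⟨f1, f2, f3, f4⟩ := hfg _ hxS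
      obtain ⟨e1, e2, e3, e4⟩ := hfg _ hbS
      exact ih.trans (core S c hc hxS hbS hint f1 f4 f2 f3 e1 e4 e2 e3)

end Graph
theorem statement18 (S : Finset Square) (c : Square → DyadicCell)
    (hc : ∀ σ ∈ S, IsStoringCell σ (c σ))
    (σ ρ : Square) (hσ : σ ∈ S) (hρ : ρ ∈ S)
    (Aσ Aρ : DyadicCell) (τσ τρ : Square)
    -- `Aσ` is a dyadic cell of maximal side length with `C_σ ⊆ Aσ` and `Aσ ⊆ τ`
    -- for some `τ ∈ S`; `τσ ∈ S` is any square with `Aσ ⊆ τσ`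
    (hAσ1 : (c σ).toSet ⊆ Aσ.toSet) (hAσ2 : ∃ τ ∈ S, Aσ.toSet ⊆ τ.toSet)
    (hAσ3 : ∀ A' : DyadicCell, (c σ).toSet ⊆ A'.toSet →
      (∃ τ ∈ S, A'.toSet ⊆ τ.toSet) → A'.side ≤ Aσ.side)
    (hτσ1 : τσ ∈ S) (hτσ2 : Aσ.toSet ⊆ τσ.toSet)
    (hAρ1 : (c ρ).toSet ⊆ Aρ.toSet) (hAρ2 : ∃ τ ∈ S, Aρ.toSet ⊆ τ.toSet)
    (hAρ3 : ∀ A' : DyadicCell, (c ρ).toSet ⊆ A'.toSet →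
      (∃ τ ∈ S, A'.toSet ⊆ τ.toSet) → A'.side ≤ Aρ.side)
    (hτρ1 : τρ ∈ S) (hτρ2 : Aρ.toSet ⊆ τρ.toSet) :
    IGConn S σ ρ ↔ ProxyConn S c (c τσ) (c τρ) := by
  classical
  constructor
  · intro h
    have hex : ∀ α : Square, ∃ (A : DyadicCell) (τ' : Square), α ∈ S →
        ((c α).toSet ⊆ A.toSet ∧ τ' ∈ S ∧ A.toSet ⊆ τ'.toSet ∧
          ∀ A' : DyadicCell, (c α).toSet ⊆ A'.toSet →
            (∃ t ∈ S, A'.toSet ⊆ t.toSet) → A'.side ≤ A.side) := by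
      intro α
      by_cases hα : α ∈ S
      · obtain ⟨A, τ', h1, h2, h3, h4⟩ := exists_valid S c hc hα
        exact ⟨A, τ', fun _ => ⟨h1, h2, h3, h4⟩⟩
      · exact ⟨⟨0, 0, 0⟩, α, fun hmem => absurd hmem hα⟩
    choose f g hfg using hex
    have hσσ : (σ.toSet ∩ σ.toSet).Nonempty := by
      obtain ⟨p, hp⟩ := square_nonempty σ
      exact ⟨p, hp, hp⟩
    have hρρ : (ρ.toSet ∩ ρ.toSet).Nonempty := by
      obtain ⟨p, hp⟩ := square_nonempty ρ
      exact ⟨p, hp, hp⟩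
    obtain ⟨v1, v2, v3, v4⟩ := hfg σ hσ
    obtain ⟨u1, u2, u3, u4⟩ := hfg ρ hρ
    have c1 : ProxyConn S c (c τσ) (c (g σ)) :=
      core S c hc hσ hσ hσσ hAσ1 hAσ3 hτσ1 hτσ2 v1 v4 v2 v3
    have c2 : ProxyConn S c (c (g σ)) (c (g ρ)) :=
      igconn_to_proxy S c hc f g (fun α hα => hfg α hα) h
    have c3 : ProxyConn S c (c (g ρ)) (c τρ) :=
      core S c hc hρ hρ hρρ u1 u4 u2 u3 hAρ1 hAρ3 hτρ1 hτρ2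
    exact c1.trans (c2.trans c3)
  · intro h
    have e1 : IGConn S σ τσ := by
      apply ig_edge S hσ hτσ1
      obtain ⟨p, hp⟩ := cell_nonempty (c σ)
      exact ⟨p, (hc σ hσ).2.1 hp, hτσ2 (hAσ1 hp)⟩
    have e2 : IGConn S τσ τρ := proxy_to_ig S c hc h τσ τρ hτσ1 rfl hτρ1 rfl
    have e3 : IGConn S τρ ρ := by
      apply ig_edge S hτρ1 hρ
      obtain ⟨p, hp⟩ := cell_nonempty (c ρ)
      exact ⟨p, hτρ2 (hAρ1 hp), (hc ρ hρ).2.1 hp⟩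
    exact (e1.trans e2).trans e3
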